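/- Let A be a ring, M an A-module generator, Γ = End_A(M)^op. Then for every A-module X, the counit map M ⊗_Γ Hom_A(M, X) → X, given by m ⊗ f ↦ f(m), is an isomorphism. -/

import Mathlib

/-!
A retraction `A → Mⁿ → A` provides `mⱼ ∈ M` and `qⱼ : M → A` with `∑ⱼ qⱼ(mⱼ) = 1`, a "dual basis"
for the unit. Then `y ↦ ∑ⱼ mⱼ ⊗ (qⱼ(-) • y)` is a section of the evaluation map, and every
`m ⊗ f` is congruent to the section of `f m` modulo the balancing relations, via the
endomorphisms `γⱼ = qⱼ(-) • m`, which satisfy `∑ⱼ γⱼ(mⱼ) = m` and `f ∘ γⱼ = qⱼ(-) • f m`.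

The tensor product over `Γ = End_A(M)ᵒᵖ` is modelled as the quotient of `M ⊗[ℤ] Hom_A(M, X)` by
the span of the relations `γ m ⊗ f - m ⊗ (f ∘ γ)`.
-/

open TensorProduct

def evalBilin (A : Type*) [Ring A] (M : Type*) [AddCommGroup M] [Module A M]
    (X : Type*) [AddCommGroup X] [Module A X] :
    M →ₗ[ℤ] ((M →ₗ[A] X) →ₗ[ℤ] X) where
  toFun m :=
    { toFun := fun f => f m
      map_add' := fun f g => rfl
      map_smul' := fun n f => rfl }
  map_add' m m' := by ext f; simp
  map_smul' n m := by ext f; simp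

theorem LinearMap.comp_smulRight {R P M N : Type*} [Semiring R] [AddCommMonoid P] [Module R P]
    [AddCommMonoid M] [Module R M] [AddCommMonoid N] [Module R N]
    (f : M →ₗ[R] N) (q : P →ₗ[R] R) (m : M) :
    f ∘ₗ q.smulRight m = q.smulRight (f m) := by
  ext x
  simp

section Counit

variable {A : Type*} [Ring A] {M : Type*} [AddCommGroup M] [Module A M]
  {X : Type*} [AddCommGroup X] [Module A X]

theorem exists_sum_apply_eq_one_of_comp_eq_id {n : ℕ} {i : A →ₗ[A] (Fin n → M)}
    {p : (Fin n → M) →ₗ[A] A} (hpi : p.comp i = LinearMap.id) :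
    ∃ (m : Fin n → M) (q : Fin n → M →ₗ[A] A), ∑ j, q j (m j) = 1 := by
  refine ⟨i 1, fun j => p ∘ₗ LinearMap.single A (fun _ => M) j, ?_⟩
  calc ∑ j, p (Pi.single j (i 1 j)) = p (i 1) := by
        rw [← map_sum, Finset.univ_sum_single]
    _ = 1 := LinearMap.congr_fun hpi 1

@[simp]
theorem evalBilin_apply_apply (m : M) (f : M →ₗ[A] X) : evalBilin A M X m f = f m :=
  rfl

/- The `ℤ`-module structure is pinned to the tensor product's own, the one `LinearMap.ker` of
`lift (evalBilin A M X)` carries; the default `AddCommGroup.toIntModule` is not reducibly equal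
to it. -/
variable (A M X) in
def balancingRelations : @Submodule ℤ (M ⊗[ℤ] (M →ₗ[A] X)) _ _ TensorProduct.instModule :=
  Submodule.span ℤ {x | ∃ (m : M) (γ : Module.End A M) (f : M →ₗ[A] X),
    x = γ m ⊗ₜ[ℤ] f - m ⊗ₜ[ℤ] (f.comp γ)}

theorem balancingRelations_le_ker_lift_evalBilin :
    balancingRelations A M X ≤ LinearMap.ker (lift (evalBilin A M X)) := by
  refine Submodule.span_le.mpr ?_
  rintro _ ⟨m, γ, f, rfl⟩
  simp

section EvalSection

variable {n : ℕ} (m : Fin n → M) (q : Fin n → M →ₗ[A] A)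

variable (X) in
@[simps]
def evalSection : X →+ M ⊗[ℤ] (M →ₗ[A] X) where
  toFun y := ∑ j, m j ⊗ₜ (q j).smulRight y
  map_zero' := by simp
  map_add' y y' := by
    simp only [← Finset.sum_add_distrib, ← tmul_add]
    congr! 2
    ext
    simp

variable {m q}

theorem lift_evalBilin_evalSection (hq : ∑ j, q j (m j) = 1) (y : X) :
    lift (evalBilin A M X) (evalSection X m q y) = y := by
  simp [evalSection, ← Finset.sum_smul, hq]

theorem sub_evalSection_mem_balancingRelations (hq : ∑ j, q j (m j) = 1)
    (z : M ⊗[ℤ] (M →ₗ[A] X)) :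
    z - evalSection X m q (lift (evalBilin A M X) z) ∈ balancingRelations A M X := by
  induction z using TensorProduct.induction_on with
  | zero => simp
  | tmul x f =>
    have hx : ∑ j, (q j).smulRight x (m j) = x := by simp [← Finset.sum_smul, hq]
    have hrel : x ⊗ₜ f - evalSection X m q (f x) =
        ∑ j, ((q j).smulRight x (m j) ⊗ₜ f - m j ⊗ₜ (f ∘ₗ (q j).smulRight x)) := by
      simp only [Finset.sum_sub_distrib, ← sum_tmul, hx, f.comp_smulRight, evalSection_apply]
    rw [lift.tmul, evalBilin_apply_apply, hrel]
    exact Submodule.sum_mem _ fun j _ => Submodule.subset_span ⟨m j, _, f, rfl⟩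
  | add z w hz hw =>
    simpa only [map_add, add_sub_add_comm] using add_mem hz hw

end EvalSection

end Counit

theorem stmt2 (A : Type*) [Ring A] (M : Type*) [AddCommGroup M] [Module A M]
    (hgen : ∃ (n : ℕ) (i : A →ₗ[A] (Fin n → M)) (p : (Fin n → M) →ₗ[A] A),
      p.comp i = LinearMap.id)
    (X : Type*) [AddCommGroup X] [Module A X] :
    Function.Surjective (TensorProduct.lift (evalBilin A M X)) ∧
      LinearMap.ker (TensorProduct.lift (evalBilin A M X)) =
        Submodule.span ℤ {x : M ⊗[ℤ] (M →ₗ[A] X) |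
          ∃ (m : M) (γ : Module.End A M) (f : M →ₗ[A] X),
            x = γ m ⊗ₜ[ℤ] f - m ⊗ₜ[ℤ] (f.comp γ)} := by
  obtain ⟨n, i, p, hpi⟩ := hgen
  obtain ⟨m, q, hq⟩ := exists_sum_apply_eq_one_of_comp_eq_id hpi
  refine ⟨fun y => ⟨_, lift_evalBilin_evalSection hq y⟩, ?_⟩
  refine le_antisymm (fun z hz => ?_) balancingRelations_le_ker_lift_evalBilin
  show z ∈ balancingRelations A M X
  simpa [LinearMap.mem_ker.mp hz] using sub_evalSection_mem_balancingRelations hq z
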